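/- arXiv:1105.3879 — 5 statements merged into one kernel-verified Lean document; each statement's English description precedes it below -/
import Mathlib

section
/- Let H be an r × n parity-check matrix over 𝔽₂ whose rows span a code whose nonzero elements all have Hamming weight at least d⊥ (i.e. d⊥ is at most the minimum distance of the dual code C⊥), and assume H has rank r (equivalently, x ↦ Hx is surjective onto 𝔽₂^r). Let S ⊆ {1,…,n} with |S| > n − d⊥, let ε ∈ 𝔽₂ⁿ be supported on S and e ∈ 𝔽₂ⁿ be supported on the complement of S, and define the bit-wise tampering function f : 𝔽₂ⁿ → 𝔽₂ⁿ by f(x)_i = ε_i for i ∈ S and f(x)_i = x_i + e_i for i ∉ S. Then for all messages m, m' ∈ 𝔽₂^r and every target t ∈ 𝔽₂^r, the number of x ∈ 𝔽₂ⁿ with Hx = m and H·f(x) = t equals the number of x ∈ 𝔽₂ⁿ with Hx = m' and H·f(x) = t. (In other words, the distribution of the decoded tampered codeword under uniform coset encoding does not depend on the encoded message, so linear coset-coding is non-malleable w.r.t. such tampering functions.) -/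
/-- **Non-malleability of linear coset-coding w.r.t. bit-wise tampering with
many constant positions.**

`H` is an `r × n` parity-check matrix over `𝔽₂` whose row space (the dual code
`C⊥`) has all its nonzero elements of Hamming weight at least `dperp`, and
`H` has rank `r` (`x ↦ H x` is surjective).  `S` is the set of positions set to
the constant bits `ε`, of size `> n - dperp`, and `e` (supported off `S`)
records the flipped positions.  The tampering function is
`f x = fun i => if i ∈ S then ε i else x i + e i`.  Then for all messages
`m, m'` and every target `t`, the number of encodings `x` of `m` with
`H (f x) = t` equals the number of encodings of `m'` with `H (f x) = t`:
the distribution of the decoded tampered codeword does not depend on the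
message. -/
theorem coset_coding_non_malleable
    {r n : ℕ} (H : Matrix (Fin r) (Fin n) (ZMod 2)) (dperp : ℕ)
    (hd : ∀ y : Fin r → ZMod 2, Matrix.vecMul y H ≠ 0 →
      dperp ≤ hammingNorm (Matrix.vecMul y H))
    (hrank : Function.Surjective (fun x : Fin n → ZMod 2 => H.mulVec x))
    (S : Finset (Fin n)) (hS : n - dperp < S.card)
    (ε : Fin n → ZMod 2) (hε : ∀ i ∉ S, ε i = 0)
    (e : Fin n → ZMod 2) (he : ∀ i ∈ S, e i = 0)
    (m m' t : Fin r → ZMod 2) :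
    Nat.card {x : Fin n → ZMod 2 //
        H.mulVec x = m ∧
        H.mulVec (fun i => if i ∈ S then ε i else x i + e i) = t} =
    Nat.card {x : Fin n → ZMod 2 //
        H.mulVec x = m' ∧
        H.mulVec (fun i => if i ∈ S then ε i else x i + e i) = t} := by
  classical
  -- Step 1: find `z` supported on `S` with `H z = m' - m`.
  obtain ⟨z, hzS, hz⟩ : ∃ z : Fin n → ZMod 2, (∀ i ∉ S, z i = 0) ∧
      H.mulVec z = m' - m := by
    set mask : (Fin n → ZMod 2) →ₗ[ZMod 2] (Fin n → ZMod 2) :=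
      LinearMap.pi (fun i => if i ∈ S then LinearMap.proj i else 0) with hmask
    have hmask_apply : ∀ (x : Fin n → ZMod 2) (i : Fin n),
        mask x i = if i ∈ S then x i else 0 := by
      intro x i
      by_cases h : i ∈ S <;> simp [hmask, LinearMap.pi_apply, h]
    set L : (Fin n → ZMod 2) →ₗ[ZMod 2] (Fin r → ZMod 2) :=
      (Matrix.mulVecLin H).comp mask with hLdef
    have hLtop : LinearMap.range L = ⊤ := by
      by_contra hne
      have hlt : LinearMap.range L < ⊤ := lt_top_iff_ne_top.mpr hne
      obtain ⟨φ, φ0, hker⟩ := (LinearMap.range L).exists_le_ker_of_lt_top hlt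
      set y : Fin r → ZMod 2 := fun j => φ (Pi.single j 1) with hy
      have hsingle : ∀ i : Fin r, (fun j => if i = j then (1 : ZMod 2) else 0)
          = Pi.single i 1 := by
        intro i; funext j; simp [Pi.single_apply, eq_comm]
      have hφ : ∀ v : Fin r → ZMod 2, φ v = dotProduct y v := by
        intro v
        rw [LinearMap.pi_apply_eq_sum_univ φ v, dotProduct]
        refine Finset.sum_congr rfl fun i _ => ?_
        rw [hsingle i]
        simp [hy, smul_eq_mul, mul_comm]
      have hφL : ∀ x : Fin n → ZMod 2,
          dotProduct (Matrix.vecMul y H) (mask x) = 0 := by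
        intro x
        have : φ (L x) = 0 := hker ⟨x, rfl⟩
        rw [hφ] at this
        simpa [hLdef, Matrix.mulVecLin_apply, Matrix.dotProduct_mulVec] using this
      have hsupp : ∀ i ∈ S, Matrix.vecMul y H i = 0 := by
        intro i hi
        have := hφL (Pi.single i 1)
        have hms : mask (Pi.single i 1) = Pi.single i 1 := by
          funext j
          rw [hmask_apply]
          by_cases h : j ∈ S
          · simp [h]
          · have : j ≠ i := by rintro rfl; exact h hi
            simp [h, Pi.single_eq_of_ne this]
        rw [hms] at this
        simpa using this
      have hyH : Matrix.vecMul y H = 0 := by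
        by_contra hne0
        have h1 : dperp ≤ hammingNorm (Matrix.vecMul y H) := hd _ hne0
        have h2 : hammingNorm (Matrix.vecMul y H) ≤ Sᶜ.card := by
          apply Finset.card_le_card
          intro i hi
          simp only [Finset.mem_filter, Finset.mem_univ, true_and] at hi
          simp only [Finset.mem_compl]
          intro hiS
          exact hi (hsupp i hiS)
        have h3 : Sᶜ.card = n - S.card := by
          rw [Finset.card_compl, Fintype.card_fin]
        have h4 : S.card ≤ n := by
          simpa using Finset.card_le_card (Finset.subset_univ S)
        omega
      apply φ0
      refine LinearMap.ext fun v => ?_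
      obtain ⟨x, rfl⟩ := hrank v
      rw [hφ, Matrix.dotProduct_mulVec, hyH]
      simp
    have : (m' - m) ∈ LinearMap.range L := hLtop ▸ Submodule.mem_top
    obtain ⟨z', hz'⟩ := this
    refine ⟨mask z', fun i hi => ?_, ?_⟩
    · rw [hmask_apply]; simp [hi]
    · simpa [hLdef, Matrix.mulVecLin_apply] using hz'
  -- Step 2: build the bijection `x ↦ x + z`.
  have hfun : ∀ x : Fin n → ZMod 2,
      (fun i => if i ∈ S then ε i else (x + z) i + e i) =
      (fun i => if i ∈ S then ε i else x i + e i) := by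
    intro x
    funext i
    by_cases h : i ∈ S
    · simp [h]
    · simp [h, hzS i h]
  have hfun' : ∀ x : Fin n → ZMod 2,
      (fun i => if i ∈ S then ε i else (x - z) i + e i) =
      (fun i => if i ∈ S then ε i else x i + e i) := by
    intro x
    funext i
    by_cases h : i ∈ S
    · simp [h]
    · simp [h, hzS i h]
  refine Nat.card_congr ⟨fun p => ⟨p.1 + z, ?_, ?_⟩, fun p => ⟨p.1 - z, ?_, ?_⟩,
    fun p => Subtype.ext (by simp), fun p => Subtype.ext (by simp)⟩
  · rw [Matrix.mulVec_add, p.2.1, hz]; abel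
  · rw [hfun]; exact p.2.2
  · rw [Matrix.mulVec_sub, p.2.1, hz]; abel
  · rw [hfun']; exact p.2.2
end

section
/- Let H be an r × n matrix over 𝔽₂ of rank r, with columns h₁,…,hₙ, and let d⊥ be the minimum Hamming weight of a nonzero element of the row space of H. Let S ⊆ {1,…,n} with |S| > n − d⊥, let ε ∈ 𝔽₂ⁿ be supported on S, let e ∈ 𝔽₂ⁿ be supported on the complement of S, and define f : 𝔽₂ⁿ → 𝔽₂ⁿ by f(x)_i = ε_i for i ∈ S and f(x)_i = x_i + e_i for i ∉ S. Then for every m ∈ 𝔽₂^r and every t ∈ 𝔽₂^r, writing A = {x ∈ 𝔽₂ⁿ : Hx = m and H·f(x) = t} and B = {κ : ({1,…,n} \ S) → 𝔽₂ : Hε + He + Σ_{i∉S} κ_i·h_i = t}, one has |A| · 2^{n−|S|} = |B| · 2^{n−r}. (That is, the tampering-experiment output Dec(f(Enc(m))) is distributed exactly as the message-independent distribution D_f = Hε + He + Σ_{i∉S} h_i·K_i with the K_i independent uniform bits.) -/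
/-!
Split the coordinates into `S` and `Sᶜ` and write `H_S`, `H_{Sᶜ}` for the corresponding column
blocks. The tampered syndrome `H f(x) = Hε + He + H_{Sᶜ} x_{Sᶜ}` depends only on `x_{Sᶜ}`, while
`Hx = m` fixes `x_S` up to the kernel of `x_S ↦ H_S x_S`, once `x_{Sᶜ}` is chosen. This map is
onto: a nonzero `y` with `yᵀ H_S = 0` would give the nonzero dual codeword `yᵀ H` supported in
`Sᶜ`, of weight at most `n - |S| < d⊥`. Hence `|A| = |B| · 2 ^ (|S| - r)`.
-/

open Function Matrix

def tamper {ι R : Type*} [DecidableEq ι] [Add R] (S : Finset ι) (ε e x : ι → R) : ι → R :=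
  fun i => if i ∈ S then ε i else x i + e i

namespace Matrix

variable {K R m ι : Type*} [Fintype ι]

theorem mulVec_surjective_iff_rank_eq_card [Fintype m] [Field K] (A : Matrix m ι K) :
    Surjective A.mulVec ↔ A.rank = Fintype.card m := by
  rw [← coe_mulVecLin, ← LinearMap.range_eq_top, rank]
  refine ⟨fun h => ?_, fun h => ?_⟩
  · rw [h, finrank_top, Module.finrank_fintype_fun_eq_card]
  · exact Submodule.eq_top_of_finrank_eq (h.trans (Module.finrank_fintype_fun_eq_card K).symm)

theorem mulVec_surjective_iff_vecMul_injective [Fintype m] [Field K] (A : Matrix m ι K) :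
    Surjective A.mulVec ↔ Injective A.vecMul := by
  rw [mulVec_surjective_iff_rank_eq_card, vecMul_injective_iff,
    linearIndependent_iff_card_eq_finrank_span, rank_eq_finrank_span_row, eq_comm]
  rfl

theorem mulVec_submatrix_surjective_of_card_sub_lt [Fintype m] [Field K] [DecidableEq K]
    (H : Matrix m ι K) (d : ℕ)
    (hd : ∀ y : m → K, vecMul y H ≠ 0 → d ≤ hammingNorm (vecMul y H))
    (hH : Surjective H.mulVec) (S : Finset ι) (hS : Fintype.card ι - d < S.card) :
    Surjective (H.submatrix id ((↑) : S → ι)).mulVec := by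
  classical
  rw [mulVec_surjective_iff_vecMul_injective] at hH ⊢
  have vecMul_eq_zero_of_restrict : ∀ y : m → K, vecMul y (H.submatrix id ((↑) : S → ι)) = 0 →
      vecMul y H = 0 := by
    intro y hy
    by_contra hne
    have hsupp : hammingNorm (vecMul y H) ≤ Sᶜ.card := by
      refine Finset.card_le_card fun i hi => Finset.mem_compl.2 fun hiS => ?_
      exact (Finset.mem_filter.1 hi).2 (congrFun hy ⟨i, hiS⟩)
    have := hd y hne
    rw [Finset.card_compl] at hsupp
    have := S.card_le_univ
    omega
  intro y₁ y₂ h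
  refine sub_eq_zero.1 (hH ?_)
  simp only [zero_vecMul]
  exact vecMul_eq_zero_of_restrict _ (by simp only [sub_vecMul]; exact sub_eq_zero.2 h)

theorem mulVec_eq_sum_smul_transpose [CommSemiring R] (A : Matrix m ι R) (x : ι → R) :
    A *ᵥ x = ∑ i, x i • Aᵀ i := by
  simp [mulVec_eq_sum, op_smul_eq_smul]

theorem mulVec_eq_mulVec_submatrix_add_mulVec_submatrix_compl [NonUnitalNonAssocSemiring R]
    [DecidableEq ι] (A : Matrix m ι R) (S : Finset ι) (x : ι → R) :
    A *ᵥ x = A.submatrix id ((↑) : S → ι) *ᵥ (fun i => x i)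
      + A.submatrix id ((↑) : ↥Sᶜ → ι) *ᵥ (fun i => x i) := by
  ext j
  simp only [mulVec, dotProduct, Pi.add_apply, submatrix_apply, id]
  rw [Finset.sum_coe_sort S (fun i => A j i * x i),
    Finset.sum_coe_sort Sᶜ (fun i => A j i * x i), Finset.sum_add_sum_compl]

theorem mulVec_tamper [DecidableEq ι] [NonUnitalNonAssocSemiring R] (H : Matrix m ι R)
    (S : Finset ι) {ε e : ι → R}
    (hε : ∀ i ∉ S, ε i = 0) (he : ∀ i ∈ S, e i = 0) (x : ι → R) :
    H *ᵥ tamper S ε e x =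
      H *ᵥ ε + H *ᵥ e + H.submatrix id ((↑) : ↥Sᶜ → ι) *ᵥ (fun i : ↥Sᶜ => x i) := by
  have on_S : (fun i : S => tamper S ε e x i) = fun i : S => ε i := funext fun i => if_pos i.2
  have on_compl :
      (fun i : ↥Sᶜ => tamper S ε e x i) = (fun i : ↥Sᶜ => x i) + fun i : ↥Sᶜ => e i :=
    funext fun i => if_neg (Finset.mem_compl.1 i.2)
  have ε_compl : (fun i : ↥Sᶜ => ε i) = 0 := funext fun i => hε i (Finset.mem_compl.1 i.2)
  have e_S : (fun i : S => e i) = 0 := funext fun i => he i i.2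
  rw [H.mulVec_eq_mulVec_submatrix_add_mulVec_submatrix_compl S, on_S, on_compl,
    H.mulVec_eq_mulVec_submatrix_add_mulVec_submatrix_compl S ε, ε_compl,
    H.mulVec_eq_mulVec_submatrix_add_mulVec_submatrix_compl S e, e_S]
  simp only [mulVec_add, mulVec_zero, add_zero, zero_add]
  abel

end Matrix

theorem AddMonoidHom.card_mul_card_ker_of_surjective {U M : Type*} [AddGroup U] [AddGroup M]
    (g : U →+ M) (hg : Surjective g) : Nat.card g.ker * Nat.card M = Nat.card U := by
  rw [← AddSubgroup.card_top (G := M), ← (AddMonoidHom.range_eq_top).2 hg,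
    ← AddSubgroup.index_ker, AddSubgroup.card_mul_index]

theorem AddMonoidHom.card_add_eq_and_eq_mul_card_ker {U W M : Type*} [AddGroup U] [AddGroup M]
    (g : U →+ M) (hg : Surjective g) (c : W → M) (P : W → Prop) (m : M) :
    Nat.card {p : U × W // g p.1 + c p.2 = m ∧ P p.2} = Nat.card {w // P w} * Nat.card g.ker := by
  let s := surjInv hg
  rw [← Nat.card_prod]
  refine Nat.card_congr
    { toFun := fun p => (⟨p.1.2, p.2.2⟩, ⟨p.1.1 - s (m - c p.1.2), ?_⟩)
      invFun := fun q => ⟨(q.2 + s (m - c q.1), q.1), ?_, q.1.2⟩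
      left_inv := fun p => by simp
      right_inv := fun q => by simp }
  · rw [AddMonoidHom.mem_ker, map_sub, surjInv_eq hg, sub_eq_zero, eq_sub_iff_add_eq]
    exact p.2.1
  · rw [map_add, q.2.2, zero_add, surjInv_eq hg, sub_add_cancel]

theorem Nat.mul_pow_sub_eq_pow_sub {b k r s n : ℕ} (hb : 1 < b) (hk : k * b ^ r = b ^ s)
    (hs : s ≤ n) :
    k * b ^ (n - s) = b ^ (n - r) := by
  have hrs : r ≤ s := by
    refine (Nat.pow_le_pow_iff_right hb).1 (hk ▸ Nat.le_mul_of_pos_left _ (Nat.pos_of_ne_zero ?_))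
    rintro rfl
    rw [zero_mul] at hk
    exact (pow_pos (by omega) s).ne' hk.symm
  apply Nat.eq_of_mul_eq_mul_right (pow_pos (by omega : 0 < b) r)
  rw [mul_right_comm, hk, ← pow_add, ← pow_add]
  congr 1
  omega

/-- **The tampering-experiment output is distributed as the message-independent
distribution `D_f`.**

`H` is an `r × n` matrix over `𝔽₂` of rank `r` (i.e. `x ↦ H x` surjective),
with columns `h i = Hᵀ i`, and `dperp` is a lower bound on the Hamming weight
of the nonzero elements of its row space.  `S` is a set of positions of size
`> n - dperp`, `ε` is supported on `S`, `e` is supported off `S`, and the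
tampering function is `f x = fun i => if i ∈ S then ε i else x i + e i`.
Then, with
`A = {x : H x = m ∧ H (f x) = t}` and
`B = {κ : (Sᶜ → 𝔽₂) : H ε + H e + ∑_{i ∉ S} κ i • h i = t}`,
one has `|A| · 2 ^ (n - |S|) = |B| · 2 ^ (n - r)`; i.e. the probability that
`Dec (f (Enc m)) = t` equals the probability that `D_f = t` where
`D_f = H ε + H e + ∑_{i ∉ S} h i • K i` with the `K i` independent uniform
bits. -/
theorem tamper_distribution_eq_Df
    {r n : ℕ} (H : Matrix (Fin r) (Fin n) (ZMod 2)) (dperp : ℕ)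
    (hd : ∀ y : Fin r → ZMod 2, Matrix.vecMul y H ≠ 0 →
      dperp ≤ hammingNorm (Matrix.vecMul y H))
    (hrank : Function.Surjective (fun x : Fin n → ZMod 2 => H.mulVec x))
    (S : Finset (Fin n)) (hS : n - dperp < S.card)
    (ε : Fin n → ZMod 2) (hε : ∀ i ∉ S, ε i = 0)
    (e : Fin n → ZMod 2) (he : ∀ i ∈ S, e i = 0)
    (m t : Fin r → ZMod 2) :
    Nat.card {x : Fin n → ZMod 2 //
        H.mulVec x = m ∧
        H.mulVec (fun i => if i ∈ S then ε i else x i + e i) = t}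
      * 2 ^ (n - S.card) =
    Nat.card {κ : {i : Fin n // i ∈ Sᶜ} → ZMod 2 //
        H.mulVec ε + H.mulVec e + ∑ i, κ i • H.transpose ↑i = t}
      * 2 ^ (n - r) := by
  let g := (H.submatrix id ((↑) : S → Fin n)).mulVecLin.toAddMonoidHom
  have hg : Surjective g := H.mulVec_submatrix_surjective_of_card_sub_lt dperp hd hrank S
    (by simpa using hS)
  let c := H.submatrix id ((↑) : ↥Sᶜ → Fin n)
  have hc : ∀ κ : ↥Sᶜ → ZMod 2, c *ᵥ κ = ∑ i, κ i • H.transpose ↑i :=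
    c.mulVec_eq_sum_smul_transpose
  let splitCoords : (Fin n → ZMod 2) ≃ (S → ZMod 2) × (↥Sᶜ → ZMod 2) :=
    (Equiv.piEquivPiSubtypeProd (· ∈ S) _).trans <| (Equiv.refl _).prodCongr <|
      (Equiv.subtypeEquivRight fun _ => Finset.mem_compl.symm).arrowCongr (Equiv.refl _)
  have hA : Nat.card {x : Fin n → ZMod 2 //
        H.mulVec x = m ∧ H.mulVec (fun i => if i ∈ S then ε i else x i + e i) = t} =
      Nat.card {κ : ↥Sᶜ → ZMod 2 // H *ᵥ ε + H *ᵥ e + c *ᵥ κ = t} * Nat.card g.ker := by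
    rw [← g.card_add_eq_and_eq_mul_card_ker hg (c *ᵥ ·)
      (fun κ => H *ᵥ ε + H *ᵥ e + c *ᵥ κ = t) m]
    refine Nat.card_congr (splitCoords.subtypeEquiv fun x => ?_)
    change H *ᵥ x = m ∧ H *ᵥ tamper S ε e x = t ↔ _
    rw [H.mulVec_eq_mulVec_submatrix_add_mulVec_submatrix_compl S x, H.mulVec_tamper S hε he x]
    rfl
  have hker : Nat.card g.ker * 2 ^ r = 2 ^ S.card := by
    simpa [Nat.card_eq_fintype_card] using g.card_mul_card_ker_of_surjective hg
  simp only [hA, hc, mul_assoc]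
  rw [Nat.mul_pow_sub_eq_pow_sub one_lt_two hker (by simpa using S.card_le_univ)]
end

section
/- Let H be an r × n matrix over 𝔽₂ of rank r, and let d⊥ be the minimum Hamming weight of a nonzero element of the row space of H. Then for every subset S ⊆ {1,…,n} with |S| < d⊥, every m ∈ 𝔽₂^r, and every assignment y : S → 𝔽₂, the number of x ∈ 𝔽₂ⁿ satisfying Hx = m and x_i = y_i for all i ∈ S equals 2^{n − r − |S|}. (Within each coset, the restriction to any fewer than d⊥ coordinates is exactly uniform.) -/
/-!
Stack `H` on top of the unit rows `eᵢ` (`i ∈ S`). If a combination `u H + ∑ vᵢ eᵢ` of the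
stacked rows vanishes, then the dual codeword `u H` is supported in `S`, so its weight is at most
`|S| < d⊥` and it is zero; as `H` has full row rank `u = 0`, and then `v = 0`. Hence the
`r + |S|` stacked rows are independent, the map `x ↦ (H x, x|_S)` is onto, and each of its
fibres is a coset of its kernel, of dimension `n - r - |S|`.
-/

open Matrix Module

theorem hammingNorm_le_card_of_eq_zero_of_notMem {ι β : Type*} [Fintype ι] [DecidableEq β]
    [Zero β] {x : ι → β} {S : Finset ι} (hx : ∀ j ∉ S, x j = 0) : hammingNorm x ≤ S.card :=
  Finset.card_le_card fun j hj => by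
    by_contra hjS
    exact (Finset.mem_filter.mp hj).2 (hx j hjS)

theorem LinearMap.card_fiber_of_surjective {K V W : Type*} [Field K]
    [AddCommGroup V] [Module K V] [FiniteDimensional K V] [AddCommGroup W] [Module K W]
    {f : V →ₗ[K] W} (hf : Function.Surjective f) (w : W) :
    Nat.card (f ⁻¹' {w}) = Nat.card K ^ (finrank K V - finrank K W) := by
  have hker : finrank K (ker f) = finrank K V - finrank K W := by
    have := f.finrank_range_add_finrank_ker
    rw [range_eq_top.mpr hf, finrank_top] at this
    omega
  rw [← hker, ← natCard_eq_pow_finrank]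
  exact Nat.card_congr (AddMonoidHom.fiberEquivKerOfSurjective (f := f.toAddMonoidHom) hf w)

namespace Matrix

section Duality

variable {K m n : Type*} [Fintype m] [Fintype n]

theorem vecMul_injective_of_mulVec_surjective [CommRing K] [DecidableEq m]
    {M : Matrix m n K} (hM : Function.Surjective M.mulVec) : Function.Injective M.vecMul := by
  refine (injective_iff_map_eq_zero (vecMulLinear M)).mpr fun u hu => funext fun i => ?_
  obtain ⟨x, hx⟩ := hM (Pi.single i 1)
  simpa [← dotProduct_mulVec, hx] using congrArg (· ⬝ᵥ x) hu

theorem mulVec_surjective_of_vecMul_injective [Field K] {M : Matrix m n K}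
    (hM : Function.Injective M.vecMul) : Function.Surjective M.mulVec := by
  have hrank : finrank K (LinearMap.range M.mulVecLin) = finrank K (m → K) := by
    rw [← rank, (vecMul_injective_iff.mp hM).rank_matrix, finrank_fintype_fun_eq_card]
  exact LinearMap.range_eq_top.mp (Submodule.eq_top_of_finrank_eq hrank)

end Duality

section CoordRows

variable {K ι : Type*} [CommRing K] [DecidableEq ι] (S : Finset ι)

def coordRows (K : Type*) [Zero K] [One K] (S : Finset ι) : Matrix S ι K :=
  of fun i => Pi.single (i : ι) 1

@[simp]
theorem coordRows_mulVec [Fintype ι] (x : ι → K) : coordRows K S *ᵥ x = fun i : S => x i := by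
  ext i
  simp [coordRows, mulVec, single_dotProduct]

theorem vecMul_coordRows_apply_of_notMem (v : S → K) {j : ι} (hj : j ∉ S) :
    (v ᵥ* coordRows K S) j = 0 := by
  refine Finset.sum_eq_zero fun i _ => ?_
  simp [coordRows, show (i : ι) ≠ j from fun h => hj (h ▸ i.2), Ne.symm]

theorem vecMul_coordRows_injective [Fintype ι] : Function.Injective (coordRows K S).vecMul :=
  vecMul_injective_iff.mpr <| by
    convert (Pi.basisFun K ι).linearIndependent.comp _ Subtype.val_injective
    ext i j
    simp [coordRows]

theorem vecMul_fromRows_coordRows_injective {m : Type*} [Fintype m] [Fintype ι] [DecidableEq K]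
    {H : Matrix m ι K} (hH : Function.Injective H.vecMul)
    (hS : ∀ u, u ᵥ* H ≠ 0 → S.card < hammingNorm (u ᵥ* H)) :
    Function.Injective (fromRows H (coordRows K S)).vecMul := by
  refine (injective_iff_map_eq_zero (vecMulLinear _)).mpr fun v hv => ?_
  have hsum : v ∘ Sum.inl ᵥ* H = -(v ∘ Sum.inr ᵥ* coordRows K S) :=
    eq_neg_of_add_eq_zero_left (by simpa using hv)
  have hcodeword : v ∘ Sum.inl ᵥ* H = 0 := by
    by_contra hne
    refine (hS _ hne).not_ge (hammingNorm_le_card_of_eq_zero_of_notMem fun j hj => ?_)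
    rw [hsum, Pi.neg_apply, vecMul_coordRows_apply_of_notMem S _ hj, neg_zero]
  have hl : v ∘ Sum.inl = 0 := hH (hcodeword.trans (zero_vecMul H).symm)
  have hr : v ∘ Sum.inr = 0 :=
    vecMul_coordRows_injective S <| by
      simpa [hcodeword, eq_comm (a := (0 : ι → K))] using hsum
  ext (i | i)
  exacts [congrFun hl i, congrFun hr i]

end CoordRows

end Matrix

/-- **Exact uniformity of few coordinates within each coset.**

`H` is an `r × n` matrix over `𝔽₂` of rank `r` (`x ↦ H x` surjective), and
`dperp` is a lower bound on the Hamming weight of the nonzero elements of the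
row space of `H` (the dual code `C⊥`).  Then for every subset `S` of positions
with `|S| < dperp`, every message `m ∈ 𝔽₂^r`, and every assignment
`y : S → 𝔽₂`, the number of `x ∈ 𝔽₂ⁿ` with `H x = m` and `x i = y i` for all
`i ∈ S` equals `2 ^ (n - r - |S|)`. -/
theorem coset_restriction_uniform
    {r n : ℕ} (H : Matrix (Fin r) (Fin n) (ZMod 2)) (dperp : ℕ)
    (hd : ∀ y : Fin r → ZMod 2, Matrix.vecMul y H ≠ 0 →
      dperp ≤ hammingNorm (Matrix.vecMul y H))
    (hrank : Function.Surjective (fun x : Fin n → ZMod 2 => H.mulVec x))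
    (S : Finset (Fin n)) (hS : S.card < dperp)
    (m : Fin r → ZMod 2) (y : Fin n → ZMod 2) :
    Nat.card {x : Fin n → ZMod 2 // H.mulVec x = m ∧ ∀ i ∈ S, x i = y i}
      = 2 ^ (n - r - S.card) := by
  set M := fromRows H (coordRows (ZMod 2) S)
  have hM : Function.Surjective M.mulVecLin :=
    mulVec_surjective_of_vecMul_injective <| vecMul_fromRows_coordRows_injective S
      (vecMul_injective_of_mulVec_surjective hrank) fun u hu => hS.trans_le (hd u hu)
  have hfiber (x : Fin n → ZMod 2) : (H.mulVec x = m ∧ ∀ i ∈ S, x i = y i) ↔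
      x ∈ M.mulVecLin ⁻¹' {Sum.elim m fun i : S => y i} := by
    simp [M, funext_iff]
  rw [Nat.card_congr (Equiv.subtypeEquivRight hfiber), LinearMap.card_fiber_of_surjective hM]
  simp [Nat.sub_sub]
end

section
/- Let H be an r × n matrix over 𝔽₂ of rank r, and let d⊥ be the minimum Hamming weight of a nonzero element of the row space of H. Then for every subset S ⊆ {1,…,n} with |S| < d⊥, all messages m, m' ∈ 𝔽₂^r, and every assignment y : S → 𝔽₂, the number of x ∈ 𝔽₂ⁿ with Hx = m and x_i = y_i for all i ∈ S equals the number of x ∈ 𝔽₂ⁿ with Hx = m' and x_i = y_i for all i ∈ S. (Wire-Tap Channel II security: an eavesdropper observing fewer than d⊥ bits of a coset-coded codeword gains no information about the message.) -/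
lemma hammingNorm_le_card_of_support {n : ℕ} (S : Finset (Fin n)) (w : Fin n → ZMod 2)
    (h : ∀ i ∉ S, w i = 0) : hammingNorm w ≤ S.card := by
  unfold hammingNorm
  apply Finset.card_le_card
  intro i hi
  simp only [Finset.mem_filter] at hi
  by_contra hc
  exact hi.2 (h i hc)

lemma exists_shift {r n : ℕ} (H : Matrix (Fin r) (Fin n) (ZMod 2)) (dperp : ℕ)
    (hd : ∀ y : Fin r → ZMod 2, Matrix.vecMul y H ≠ 0 →
      dperp ≤ hammingNorm (Matrix.vecMul y H))
    (hrank : Function.Surjective (fun x : Fin n → ZMod 2 => H.mulVec x))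
    (S : Finset (Fin n)) (hS : S.card < dperp) (t : Fin r → ZMod 2) :
    ∃ x₀ : Fin n → ZMod 2, H.mulVec x₀ = t ∧ ∀ i ∈ S, x₀ i = 0 := by
  set V : Submodule (ZMod 2) (Fin n → ZMod 2) :=
    { carrier := {x | ∀ i ∈ S, x i = 0}
      add_mem' := fun hx hy i hi => by simp [hx i hi, hy i hi]
      zero_mem' := fun i hi => rfl
      smul_mem' := fun c x hx i hi => by simp [hx i hi] } with hV
  have hmem : ∀ x, x ∈ V ↔ ∀ i ∈ S, x i = 0 := fun x => Iff.rfl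
  set W : Submodule (ZMod 2) (Fin r → ZMod 2) := V.map H.mulVecLin with hW
  have hWtop : W = ⊤ := by
    by_contra hne
    obtain ⟨f, hf0, hfbot⟩ :=
      Submodule.exists_dual_map_eq_bot_of_lt_top (lt_top_iff_ne_top.mpr hne) inferInstance
    set a : Fin r → ZMod 2 := fun i => f (Pi.single i 1) with ha
    have hfa : ∀ v : Fin r → ZMod 2, f v = dotProduct a v := by
      intro v
      have : v = ∑ i, v i • Pi.single i (1 : ZMod 2) := by
        ext j; simp [Pi.single_apply, eq_comm]
      nth_rewrite 1 [this]
      rw [map_sum, dotProduct]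
      apply Finset.sum_congr rfl
      intro i _
      rw [map_smul, smul_eq_mul]
      exact mul_comm (v i) (a i)
    have hWf : ∀ w ∈ W, f w = 0 := by
      intro w hw
      have : f w ∈ W.map f := Submodule.mem_map_of_mem hw
      rw [hfbot] at this
      simpa using this
    have hvm : ∀ x ∈ V, dotProduct (Matrix.vecMul a H) x = 0 := by
      intro x hx
      rw [← Matrix.dotProduct_mulVec, ← hfa]
      exact hWf _ (Submodule.mem_map_of_mem hx)
    have hsupp : ∀ i ∉ S, Matrix.vecMul a H i = 0 := by
      intro i hi
      have hmemV : (Pi.single i (1 : ZMod 2)) ∈ V := by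
        intro j hj
        have : i ≠ j := fun h => hi (h ▸ hj)
        simp [Pi.single_apply, this.symm]
      have := hvm _ hmemV
      rwa [dotProduct_single, mul_one] at this
    have hzero : Matrix.vecMul a H = 0 := by
      by_contra hne'
      have := hd a hne'
      have hle := hammingNorm_le_card_of_support S (Matrix.vecMul a H) hsupp
      omega
    have haz : a = 0 := by
      ext i
      obtain ⟨x, hx⟩ := hrank (Pi.single i 1)
      have : dotProduct a (Pi.single i 1) = 0 := by
        rw [← hx]
        simp only []
        rw [Matrix.dotProduct_mulVec, hzero, zero_dotProduct]
      rwa [dotProduct_single, mul_one] at this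
    apply hf0
    apply LinearMap.ext
    intro v
    rw [hfa, haz]
    simp
  have : t ∈ W := hWtop ▸ Submodule.mem_top
  obtain ⟨x₀, hx₀, hx₀t⟩ := this
  exact ⟨x₀, hx₀t, hx₀⟩

/-- **Wire-Tap Channel II security.**

`H` is an `r × n` matrix over `𝔽₂` of rank `r` (`x ↦ H x` surjective), and
`dperp` is a lower bound on the Hamming weight of the nonzero elements of the
row space of `H` (the dual code `C⊥`).  Then for every subset `S` of positions
with `|S| < dperp`, all messages `m, m' ∈ 𝔽₂^r`, and every assignment
`y : S → 𝔽₂`, the number of encodings of `m` agreeing with `y` on `S` equals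
the number of encodings of `m'` agreeing with `y` on `S`: an eavesdropper
observing fewer than `dperp` bits of a coset-coded codeword gains no
information about the message. -/
theorem wiretap_II_security
    {r n : ℕ} (H : Matrix (Fin r) (Fin n) (ZMod 2)) (dperp : ℕ)
    (hd : ∀ y : Fin r → ZMod 2, Matrix.vecMul y H ≠ 0 →
      dperp ≤ hammingNorm (Matrix.vecMul y H))
    (hrank : Function.Surjective (fun x : Fin n → ZMod 2 => H.mulVec x))
    (S : Finset (Fin n)) (hS : S.card < dperp)
    (m m' : Fin r → ZMod 2) (y : Fin n → ZMod 2) :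
    Nat.card {x : Fin n → ZMod 2 // H.mulVec x = m ∧ ∀ i ∈ S, x i = y i}
      = Nat.card {x : Fin n → ZMod 2 // H.mulVec x = m' ∧ ∀ i ∈ S, x i = y i} := by
  obtain ⟨x₀, hx₀, hx₀S⟩ := exists_shift H dperp hd hrank S hS (m' - m)
  have hx₀' : H.mulVec x₀ = m' + m := by
    ext i
    rw [hx₀]
    simp only [Pi.sub_apply, Pi.add_apply]
    exact CharTwo.sub_eq_add _ _
  have hadd : ∀ u v : Fin r → ZMod 2, u + (v + u) = v := by
    intro u v
    ext i
    simp only [Pi.add_apply]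
    rw [add_comm (v i), ← add_assoc, CharTwo.add_self_eq_zero, zero_add]
  have key : ∀ (x : Fin n → ZMod 2), (x + x₀) + x₀ = x := by
    intro x
    ext i
    have h2 : x₀ i + x₀ i = 0 := CharTwo.add_self_eq_zero _
    simp [add_assoc, h2]
  apply Nat.card_congr
  refine ⟨fun x => ⟨x.1 + x₀, ?_, ?_⟩, fun x => ⟨x.1 + x₀, ?_, ?_⟩, ?_, ?_⟩
  · rw [Matrix.mulVec_add, x.2.1, hx₀']; exact hadd m m'
  · intro i hi; simp [hx₀S i hi, x.2.2 i hi]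
  · rw [Matrix.mulVec_add, x.2.1, hx₀', add_comm m' m]; exact hadd m' m
  · intro i hi; simp [hx₀S i hi, x.2.2 i hi]
  · intro x; exact Subtype.ext (key x.1)
  · intro x; exact Subtype.ext (key x.1)
end

section
/- Let C be a linear subspace of 𝔽₂ⁿ with dual code C⊥ = {w ∈ 𝔽₂ⁿ : w·c = 0 for all c ∈ C}. For i ≥ 1, define the i-th generalized Hamming weight d_i of C⊥ as the minimum, over all i-dimensional subspaces D ⊆ C⊥, of the size of the support of D (the union of the supports of its elements). Then for every subset S ⊆ {1,…,n} with |S| < d_i, the subspace {w ∈ C⊥ : supp(w) ⊆ S} has dimension at most i − 1, and consequently the image of the restriction map C → 𝔽₂^S, x ↦ (x_i)_{i∈S}, has codimension at most i − 1 in 𝔽₂^S. (An eavesdropper observing fewer than d_i positions of a coset-coded codeword learns at most i − 1 bits of information about the message.) -/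
open Finset in
/-- The dual code of `C ⊆ 𝔽₂ⁿ` w.r.t. the standard bilinear form
`w · c = ∑ i, w i * c i`. -/
def dualCode {n : ℕ} (C : Submodule (ZMod 2) (Fin n → ZMod 2)) :
    Submodule (ZMod 2) (Fin n → ZMod 2) where
  carrier := {w | ∀ c ∈ C, ∑ i, w i * c i = 0}
  zero_mem' := by intro c _; simp
  add_mem' := by
    intro a b ha hb c hc
    simpa [add_mul, Finset.sum_add_distrib] using by rw [ha c hc, hb c hc, add_zero]
  smul_mem' := by
    intro t a ha c hc
    simp only [Pi.smul_apply, smul_eq_mul, mul_assoc, ← Finset.mul_sum, ha c hc, mul_zero]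

/-- The subspace of vectors of `𝔽₂ⁿ` whose support is contained in `S`. -/
def supportedIn {n : ℕ} (S : Finset (Fin n)) :
    Submodule (ZMod 2) (Fin n → ZMod 2) where
  carrier := {w | ∀ j ∉ S, w j = 0}
  zero_mem' := by intro j _; rfl
  add_mem' := by intro a b ha hb j hj; simp [ha j hj, hb j hj]
  smul_mem' := by intro t a ha j hj; simp [ha j hj]

/-!
An `i`-dimensional subspace of `C⊥` supported in `S` would have support of size at most
`|S| < d_i`, so `C⊥ ∩ 𝔽₂^S` has dimension below `i`. For the second claim, extension by zero
embeds the dot-product orthogonal of the restricted code `C|_S ⊆ 𝔽₂^S` into `C⊥ ∩ 𝔽₂^S`, and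
`dim C|_S + dim (C|_S)⊥ ≥ |S|` holds for any bilinear form on `𝔽₂^S`.
-/

open Module Function Matrix LinearMap

namespace Submodule

variable {K V : Type*} [DivisionRing K] [AddCommGroup V] [Module K V]

theorem exists_le_finrank_eq {W : Submodule K V} {k : ℕ} (h : k ≤ finrank K W) :
    ∃ D ≤ W, finrank K D = k := by
  obtain ⟨f, hf⟩ := exists_linearIndependent_of_le_finrank h
  refine ⟨span K (Set.range (W.subtype ∘ f)), span_le.mpr ?_, ?_⟩
  · rintro _ ⟨j, rfl⟩
    exact (f j).2
  · rw [finrank_span_eq_card (hf.map' W.subtype W.ker_subtype), Fintype.card_fin]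

end Submodule

section ExtendByZero

variable {ι κ : Type*} [Fintype ι] [Fintype κ] {s : κ → ι}

theorem extend_zero_dotProduct {R : Type*} [NonUnitalNonAssocSemiring R] (hs : Injective s)
    (x : κ → R) (c : ι → R) : extend s x 0 ⬝ᵥ c = x ⬝ᵥ (c ∘ s) :=
  (Fintype.sum_of_injective s hs _ _
    (fun i hi => by rw [extend_apply' _ _ _ (by simpa using hi), Pi.zero_apply, zero_mul])
    (fun k => by rw [hs.extend_apply]; rfl)).symm

theorem map_extendByZero_orthogonal_le {R : Type*} [CommRing R] (hs : Injective s)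
    (C : Submodule R (ι → R)) :
    (BilinForm.orthogonal (dotProductBilin R R) (C.map (funLeft R R s))).map
        (ExtendByZero.linearMap R s) ≤ BilinForm.orthogonal (dotProductBilin R R) C := by
  rintro _ ⟨x, hx, rfl⟩ c hc
  have hxc : (c ∘ s) ⬝ᵥ x = 0 :=
    BilinForm.mem_orthogonal_iff.mp hx _ (Submodule.mem_map_of_mem hc)
  change c ⬝ᵥ extend s x 0 = 0
  rw [dotProduct_comm, extend_zero_dotProduct hs, dotProduct_comm, hxc]

theorem card_le_finrank_map_funLeft_add_finrank_orthogonal_inf_range {K : Type*} [Field K]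
    (hs : Injective s) (C : Submodule K (ι → K)) :
    Fintype.card κ ≤ finrank K (C.map (funLeft K K s)) +
      finrank K ↥(BilinForm.orthogonal (dotProductBilin K K) C ⊓
        LinearMap.range (ExtendByZero.linearMap K s)) := by
  set V := C.map (funLeft K K s)
  have hrank := BilinForm.finrank_add_finrank_orthogonal' (B := dotProductBilin K K) V
  have hinj : Injective (ExtendByZero.linearMap K s) := extend_injective hs (0 : ι → K)
  have hmap : finrank K (BilinForm.orthogonal (dotProductBilin K K) V) ≤
      finrank K ↥(BilinForm.orthogonal (dotProductBilin K K) C ⊓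
        LinearMap.range (ExtendByZero.linearMap K s)) :=
    (Submodule.equivMapOfInjective _ hinj _).finrank_eq.trans_le <| Submodule.finrank_mono <|
      le_inf (map_extendByZero_orthogonal_le hs C) LinearMap.map_le_range
  rw [finrank_fintype_fun_eq_card] at hrank
  omega

end ExtendByZero

section BinaryCodes

variable {n : ℕ}

theorem dualCode_eq_orthogonal (C : Submodule (ZMod 2) (Fin n → ZMod 2)) :
    dualCode C = BilinForm.orthogonal (dotProductBilin (ZMod 2) (ZMod 2)) C := by
  ext w
  rw [BilinForm.mem_orthogonal_iff]
  exact forall₂_congr fun c _ => by rw [dotProductBilin_apply_apply, dotProduct_comm]; rfl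

theorem range_extendByZero_val_le_supportedIn (S : Finset (Fin n)) :
    LinearMap.range (ExtendByZero.linearMap (ZMod 2) (fun j : {j : Fin n // j ∈ S} => (j : Fin n)))
      ≤ supportedIn S := by
  rintro _ ⟨x, rfl⟩ j hj
  exact extend_apply' _ _ _ (by simpa using hj)

theorem ncard_support_le_card_of_le_supportedIn {S : Finset (Fin n)}
    {D : Submodule (ZMod 2) (Fin n → ZMod 2)} (hD : D ≤ supportedIn S) :
    {j : Fin n | ∃ w ∈ D, w j ≠ 0}.ncard ≤ S.card := by
  rw [← Set.ncard_coe_finset]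
  refine Set.ncard_le_ncard ?_ S.finite_toSet
  rintro j ⟨w, hw, hwj⟩
  by_contra hj
  exact hwj (hD hw j hj)

theorem card_le_finrank_map_funLeft_add_finrank_dualCode_inf_supportedIn
    (C : Submodule (ZMod 2) (Fin n → ZMod 2)) (S : Finset (Fin n)) :
    S.card ≤ finrank (ZMod 2)
        (C.map (funLeft (ZMod 2) (ZMod 2) (fun j : {j : Fin n // j ∈ S} => (j : Fin n)))) +
      finrank (ZMod 2) ↥(dualCode C ⊓ supportedIn S) := by
  have h := card_le_finrank_map_funLeft_add_finrank_orthogonal_inf_range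
    (Subtype.val_injective (p := (· ∈ S))) C
  rw [Fintype.card_coe, ← dualCode_eq_orthogonal] at h
  exact h.trans (Nat.add_le_add_left (Submodule.finrank_mono
    (inf_le_inf_left _ (range_extendByZero_val_le_supportedIn S))) _)

end BinaryCodes

theorem generalized_wiretap_secrecy_general
    {n : ℕ} (C : Submodule (ZMod 2) (Fin n → ZMod 2))
    (i : ℕ) (di : ℕ)
    (hdi : ∀ D : Submodule (ZMod 2) (Fin n → ZMod 2),
      D ≤ dualCode C → Module.finrank (ZMod 2) D = i →
        di ≤ Set.ncard {j : Fin n | ∃ w ∈ D, w j ≠ 0})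
    (S : Finset (Fin n)) (hS : S.card < di) :
    Module.finrank (ZMod 2) ↥(dualCode C ⊓ supportedIn S) ≤ i - 1 ∧
    S.card - Module.finrank (ZMod 2)
        ↥(C.map (LinearMap.funLeft (ZMod 2) (ZMod 2)
            (fun j : {j : Fin n // j ∈ S} => (j : Fin n)))) ≤ i - 1 := by
  have hW : finrank (ZMod 2) ↥(dualCode C ⊓ supportedIn S) ≤ i - 1 := by
    by_contra! hbig
    obtain ⟨D, hDW, hD⟩ := Submodule.exists_le_finrank_eq
      (W := dualCode C ⊓ supportedIn S) (k := i) (by omega)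
    have hsupp := ncard_support_le_card_of_le_supportedIn (hDW.trans inf_le_right)
    have := hdi D (hDW.trans inf_le_left) hD
    omega
  have hcount := card_le_finrank_map_funLeft_add_finrank_dualCode_inf_supportedIn C S
  exact ⟨hW, by omega⟩

/-- **Generalized Hamming weights and the Wire-Tap II secrecy bound.**

Let `C ⊆ 𝔽₂ⁿ` be a linear code with dual code `C⊥ = dualCode C`, let `i ≥ 1`,
and let `d i` be the `i`-th generalized Hamming weight of `C⊥`: a lower bound
on the support size of every `i`-dimensional subspace `D ⊆ C⊥` (the support
of `D` being the union of the supports of its elements).  Then for every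
subset `S` of positions with `|S| < d i`:
* the subspace `{w ∈ C⊥ : supp w ⊆ S}` has dimension at most `i - 1`, and
* the image of the restriction map `C → 𝔽₂^S`, `x ↦ (x j)_{j ∈ S}`, has
  codimension at most `i - 1` in `𝔽₂^S`,
so an eavesdropper observing fewer than `d i` positions of a coset-coded
codeword learns at most `i - 1` bits of information about the message. -/
theorem generalized_wiretap_secrecy
    {n : ℕ} (C : Submodule (ZMod 2) (Fin n → ZMod 2))
    (i : ℕ) (hi : 1 ≤ i) (di : ℕ)
    (hdi : ∀ D : Submodule (ZMod 2) (Fin n → ZMod 2),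
      D ≤ dualCode C → Module.finrank (ZMod 2) D = i →
        di ≤ Set.ncard {j : Fin n | ∃ w ∈ D, w j ≠ 0})
    (S : Finset (Fin n)) (hS : S.card < di) :
    Module.finrank (ZMod 2) ↥(dualCode C ⊓ supportedIn S) ≤ i - 1 ∧
    S.card - Module.finrank (ZMod 2)
        ↥(C.map (LinearMap.funLeft (ZMod 2) (ZMod 2)
            (fun j : {j : Fin n // j ∈ S} => (j : Fin n)))) ≤ i - 1 :=
  generalized_wiretap_secrecy_general C i di hdi S hS
end
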